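/- arXiv:2204.08125 — 6 statements merged into one kernel-verified Lean document; each statement's English description precedes it below -/
import Mathlib

section
/- Let π and π′ be two policies. Then the gap between the weighted-average policy advantage and agent n's local policy advantage satisfies |Σ_{k=1}^N q_k 𝔸_k(π′) − 𝔸_n(π′)| ≤ ‖B_n‖_F · √( Σ_{s∈S} Σ_{a∈A} ( ρ_n(s) · (π′(a|s) − π(a|s)) )² ). -/
open Finset

/-- A (stochastic) policy: for each state `s`, `π s` is a probability
distribution over actions. -/
def IsPolicy {S A : Type*} [Fintype A] (π : S → A → ℝ) : Prop :=
  ∀ s, (∀ a, 0 ≤ π s a) ∧ ∑ a, π s a = 1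

/-- Policy advantage `𝔸(σ) = Σ_s ρ(s) Σ_a σ(a|s) A(s,a)`. -/
noncomputable def policyAdv {S A : Type*} [Fintype S] [Fintype A]
    (ρ : S → ℝ) (Adv : S → A → ℝ) (σ : S → A → ℝ) : ℝ :=
  ∑ s, ρ s * ∑ a, σ s a * Adv s a

/-- Frobenius norm of a matrix indexed by `S × A`. -/
noncomputable def frobNorm {S A : Type*} [Fintype S] [Fintype A]
    (M : S → A → ℝ) : ℝ :=
  Real.sqrt (∑ s, ∑ a, (M s a) ^ 2)

/-- Total-variation distance between two distributions on a finite set. -/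
noncomputable def dTV {A : Type*} [Fintype A] (p q : A → ℝ) : ℝ :=
  (1 / 2) * ∑ a, |p a - q a|

/-- Heterogeneity matrix of agent `n`:
`B_n(s,a) = Σ_k q_k (ρ_k(s)/ρ_n(s)) A_k(s,a) − A_n(s,a)`. -/
noncomputable def hetMat {S A : Type*} [Fintype S] [Fintype A] (N : ℕ)
    (q : Fin N → ℝ) (ρ : Fin N → S → ℝ) (Adv : Fin N → S → A → ℝ)
    (n : Fin N) : S → A → ℝ :=
  fun s a => (∑ k, q k * (ρ k s / ρ n s) * Adv k s a) - Adv n s a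

/-- the gap between the weighted-average policy advantage and
agent `n`'s local policy advantage is bounded by
`‖B_n‖_F · √( Σ_s Σ_a ( ρ_n(s)(π'(a|s) − π(a|s)) )² )`. -/
theorem gap_bound {S A : Type*} [Fintype S] [Fintype A] [Nonempty S] [Nonempty A]
    (N : ℕ) (q : Fin N → ℝ) (hq : ∀ k, 0 ≤ q k) (hqsum : ∑ k, q k = 1)
    (π π' : S → A → ℝ) (hπ : IsPolicy π) (hπ' : IsPolicy π')
    (ρ : Fin N → S → ℝ) (hρ : ∀ k s, 0 < ρ k s)
    (Adv : Fin N → S → A → ℝ)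
    (hAdv : ∀ k s, ∑ a, π s a * Adv k s a = 0)
    (n : Fin N) :
    |(∑ k, q k * policyAdv (ρ k) (Adv k) π') - policyAdv (ρ n) (Adv n) π'|
      ≤ frobNorm (hetMat N q ρ Adv n)
        * Real.sqrt (∑ s, ∑ a, (ρ n s * (π' s a - π s a)) ^ 2) := by
  classical
  set B := hetMat N q ρ Adv n with hB
  have key : (∑ k, q k * policyAdv (ρ k) (Adv k) π') - policyAdv (ρ n) (Adv n) π'
      = ∑ s, ∑ a, B s a * (ρ n s * (π' s a - π s a)) := by
    simp only [policyAdv, Finset.mul_sum]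
    rw [Finset.sum_comm, ← Finset.sum_sub_distrib]
    refine Finset.sum_congr rfl fun s _ => ?_
    have hn : ρ n s ≠ 0 := (hρ n s).ne'
    have hBn : ∀ a, ρ n s * B s a
        = (∑ k, q k * ρ k s * Adv k s a) - ρ n s * Adv n s a := by
      intro a
      simp only [hB, hetMat]
      rw [mul_sub, Finset.mul_sum]
      congr 1
      refine Finset.sum_congr rfl fun k _ => ?_
      field_simp
      try ring
    have hzero : ∑ a, π s a * (ρ n s * B s a) = 0 := by
      simp only [hBn, mul_sub, Finset.sum_sub_distrib]
      have h1 : ∑ a, π s a * ∑ k, q k * ρ k s * Adv k s a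
          = ∑ k, q k * ρ k s * ∑ a, π s a * Adv k s a := by
        simp only [Finset.mul_sum]
        rw [Finset.sum_comm]
        refine Finset.sum_congr rfl fun k _ => ?_
        exact Finset.sum_congr rfl fun a _ => by ring
      have h2 : ∑ a, π s a * (ρ n s * Adv n s a)
          = ρ n s * ∑ a, π s a * Adv n s a := by
        rw [Finset.mul_sum]
        exact Finset.sum_congr rfl fun a _ => by ring
      rw [h1, h2, hAdv n s]
      simp [hAdv _ s]
    have step1 : ∑ a, B s a * (ρ n s * (π' s a - π s a))
        = ∑ a, π' s a * (ρ n s * B s a) := by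
      have : ∀ a, B s a * (ρ n s * (π' s a - π s a))
          = π' s a * (ρ n s * B s a) - π s a * (ρ n s * B s a) := fun a => by ring
      simp only [this, Finset.sum_sub_distrib, hzero, sub_zero]
    rw [step1]
    have step2 : ∑ a, π' s a * (ρ n s * B s a)
        = (∑ k, q k * (ρ k s * ∑ a, π' s a * Adv k s a))
          - ρ n s * ∑ a, π' s a * Adv n s a := by
      simp only [hBn, mul_sub, Finset.sum_sub_distrib]
      congr 1
      · simp only [Finset.mul_sum]
        rw [Finset.sum_comm]
        refine Finset.sum_congr rfl fun k _ => ?_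
        exact Finset.sum_congr rfl fun a _ => by ring
      · rw [Finset.mul_sum]
        exact Finset.sum_congr rfl fun a _ => by ring
    rw [step2]
    simp only [Finset.mul_sum]
  rw [key]
  set f : S × A → ℝ := fun p => B p.1 p.2
  set g : S × A → ℝ := fun p => ρ n p.1 * (π' p.1 p.2 - π p.1 p.2)
  have hsum : ∑ s, ∑ a, B s a * (ρ n s * (π' s a - π s a))
      = ∑ p : S × A, f p * g p := by rw [Fintype.sum_prod_type]
  have hf : ∑ s, ∑ a, (B s a) ^ 2 = ∑ p : S × A, f p ^ 2 := by
    rw [Fintype.sum_prod_type]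
  have hg : ∑ s, ∑ a, (ρ n s * (π' s a - π s a)) ^ 2 = ∑ p : S × A, g p ^ 2 := by
    rw [Fintype.sum_prod_type]
  rw [hsum, frobNorm, hf, hg]
  have cs := Finset.sum_mul_sq_le_sq_mul_sq Finset.univ f g
  have h1 : |∑ p : S × A, f p * g p| =
      Real.sqrt ((∑ p : S × A, f p * g p) ^ 2) := by
    rw [Real.sqrt_sq_eq_abs]
  rw [h1, ← Real.sqrt_mul (Finset.sum_nonneg fun p _ => sq_nonneg (f p))]
  exact Real.sqrt_le_sqrt cs
end

section
/- (Theorem 1) Let π and π′ be two policies and let n be any agent index, 1 ≤ n ≤ N. Then Σ_{k=1}^N q_k 𝔸_k(π′) ≥ 𝔸_n(π′) − α · Σ_{s∈S} ρ_n(s) · D_TV(π(·|s) ‖ π′(·|s)), where α = 2‖B_n‖_F. -/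
open Finset

/-- Theorem 1:
`Σ_k q_k 𝔸_k(π') ≥ 𝔸_n(π') − α Σ_s ρ_n(s) D_TV(π(·|s)‖π'(·|s))`
with `α = 2‖B_n‖_F`. -/
theorem theorem1 {S A : Type*} [Fintype S] [Fintype A] [Nonempty S] [Nonempty A]
    (N : ℕ) (q : Fin N → ℝ) (hq : ∀ k, 0 ≤ q k) (hqsum : ∑ k, q k = 1)
    (π π' : S → A → ℝ) (hπ : IsPolicy π) (hπ' : IsPolicy π')
    (ρ : Fin N → S → ℝ) (hρ : ∀ k s, 0 < ρ k s)
    (Adv : Fin N → S → A → ℝ)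
    (hAdv : ∀ k s, ∑ a, π s a * Adv k s a = 0)
    (n : Fin N) :
    ∑ k, q k * policyAdv (ρ k) (Adv k) π'
      ≥ policyAdv (ρ n) (Adv n) π'
        - (2 * frobNorm (hetMat N q ρ Adv n))
          * ∑ s, ρ n s * dTV (π s) (π' s) := by
  classical
  set B := hetMat N q ρ Adv n with hB
  set F := frobNorm B with hF
  have hFnn : 0 ≤ F := Real.sqrt_nonneg _
  have habs : ∀ s a, |B s a| ≤ F := by
    intro s a
    have h1 : (B s a) ^ 2 ≤ ∑ s, ∑ a, (B s a) ^ 2 := by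
      calc (B s a) ^ 2 ≤ ∑ a, (B s a) ^ 2 :=
            Finset.single_le_sum (f := fun a => (B s a) ^ 2)
              (fun a _ => sq_nonneg _) (Finset.mem_univ a)
        _ ≤ ∑ s, ∑ a, (B s a) ^ 2 :=
            Finset.single_le_sum (f := fun s => ∑ a, (B s a) ^ 2)
              (fun s _ => Finset.sum_nonneg fun a _ => sq_nonneg _)
              (Finset.mem_univ s)
    calc |B s a| = Real.sqrt ((B s a) ^ 2) := (Real.sqrt_sq_eq_abs _).symm
      _ ≤ F := Real.sqrt_le_sqrt h1
  -- per-state: ∑_a π B = 0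
  have hB0 : ∀ s, ∑ a, π s a * B s a = 0 := by
    intro s
    have : ∑ a, π s a * B s a
        = (∑ k, q k * (ρ k s / ρ n s) * ∑ a, π s a * Adv k s a)
          - ∑ a, π s a * Adv n s a := by
      simp only [hB, hetMat, mul_sub, Finset.sum_sub_distrib, Finset.mul_sum]
      congr 1
      rw [Finset.sum_comm]
      apply Finset.sum_congr rfl
      intro k _
      apply Finset.sum_congr rfl
      intro a _
      ring
    rw [this]
    simp [hAdv]
  -- per-state bound
  have hstate : ∀ s, ∑ a, π' s a * B s a ≥ -((2 * F) * dTV (π s) (π' s)) := by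
    intro s
    have heq : ∑ a, π' s a * B s a = ∑ a, (π' s a - π s a) * B s a := by
      have : ∑ a, (π' s a - π s a) * B s a
          = ∑ a, π' s a * B s a - ∑ a, π s a * B s a := by
        rw [← Finset.sum_sub_distrib]; apply Finset.sum_congr rfl; intros; ring
      rw [this, hB0 s]; ring
    have hle : |∑ a, (π' s a - π s a) * B s a| ≤ (2 * F) * dTV (π s) (π' s) := by
      calc |∑ a, (π' s a - π s a) * B s a| ≤ ∑ a, |(π' s a - π s a) * B s a| :=
            Finset.abs_sum_le_sum_abs _ _
        _ ≤ ∑ a, |π' s a - π s a| * F := by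
            apply Finset.sum_le_sum
            intro a _
            rw [abs_mul]
            exact mul_le_mul_of_nonneg_left (habs s a) (abs_nonneg _)
        _ = (2 * F) * dTV (π s) (π' s) := by
            rw [← Finset.sum_mul]
            simp only [dTV]
            have : ∑ a, |π' s a - π s a| = ∑ a, |π s a - π' s a| := by
              apply Finset.sum_congr rfl; intros; rw [abs_sub_comm]
            rw [this]; ring
    rw [heq]
    have := neg_abs_le (∑ a, (π' s a - π s a) * B s a)
    linarith
  -- identity for the difference
  have key : ∑ k, q k * policyAdv (ρ k) (Adv k) π' - policyAdv (ρ n) (Adv n) π'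
      = ∑ s, ρ n s * ∑ a, π' s a * B s a := by
    simp only [policyAdv, hB, hetMat, mul_sub, Finset.mul_sum, Finset.sum_sub_distrib]
    congr 1
    rw [Finset.sum_comm]
    apply Finset.sum_congr rfl
    intro s _
    rw [Finset.sum_comm]
    apply Finset.sum_congr rfl
    intro k _
    apply Finset.sum_congr rfl
    intro a _
    have hne : ρ n s ≠ 0 := (hρ n s).ne'
    field_simp
  have hsum : ∑ s, ρ n s * ∑ a, π' s a * B s a
      ≥ ∑ s, ρ n s * (-((2 * F) * dTV (π s) (π' s))) := by
    apply Finset.sum_le_sum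
    intro s _
    exact mul_le_mul_of_nonneg_left (hstate s) (le_of_lt (hρ n s))
  have : ∑ s, ρ n s * (-((2 * F) * dTV (π s) (π' s)))
      = -((2 * F) * ∑ s, ρ n s * dTV (π s) (π' s)) := by
    rw [Finset.mul_sum, ← Finset.sum_neg_distrib]
    apply Finset.sum_congr rfl
    intros; ring
  rw [this] at hsum
  linarith [key, hsum]
end

section
/- (Corollary 1, necessary condition for learnability) Suppose ‖A_n‖_F ≤ ‖B_n‖_F, where A_n is viewed as the matrix (A_n(s,a))_{s∈S,a∈A}. Then for every policy π′, the penalized local policy advantage of agent n is nonpositive: 𝔸_n(π′) − 2‖B_n‖_F · Σ_{s∈S} ρ_n(s) · D_TV(π(·|s) ‖ π′(·|s)) ≤ 0. Consequently, ‖B_n‖_F < ‖A_n‖_F is a necessary condition for the Theorem-1 lower bound on the averaged policy advantage to be positive for some local update π′. -/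
open Finset

/-- Corollary 1, necessary condition for learnability: if
`‖A_n‖_F ≤ ‖B_n‖_F`, then for every policy `π'` the penalized local policy
advantage of agent `n` is nonpositive. -/
theorem corollary1 {S A : Type*} [Fintype S] [Fintype A] [Nonempty S] [Nonempty A]
    (N : ℕ) (q : Fin N → ℝ) (hq : ∀ k, 0 ≤ q k) (hqsum : ∑ k, q k = 1)
    (π : S → A → ℝ) (hπ : IsPolicy π)
    (ρ : Fin N → S → ℝ) (hρ : ∀ k s, 0 < ρ k s)
    (Adv : Fin N → S → A → ℝ)
    (hAdv : ∀ k s, ∑ a, π s a * Adv k s a = 0)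
    (n : Fin N)
    (hle : frobNorm (Adv n) ≤ frobNorm (hetMat N q ρ Adv n)) :
    ∀ π' : S → A → ℝ, IsPolicy π' →
      policyAdv (ρ n) (Adv n) π'
        - (2 * frobNorm (hetMat N q ρ Adv n))
          * ∑ s, ρ n s * dTV (π s) (π' s) ≤ 0 := by

  intro π' hπ'
  set C := frobNorm (hetMat N q ρ Adv n) with hC
  have hCnn : 0 ≤ C := Real.sqrt_nonneg _
  -- pointwise bound |Adv n s a| ≤ C
  have habs : ∀ s a, |Adv n s a| ≤ C := by
    intro s a
    have h1 : (Adv n s a) ^ 2 ≤ ∑ s, ∑ a, (Adv n s a) ^ 2 := by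
      calc (Adv n s a) ^ 2 ≤ ∑ a, (Adv n s a) ^ 2 :=
            Finset.single_le_sum (f := fun a => (Adv n s a) ^ 2)
              (fun i _ => sq_nonneg _) (Finset.mem_univ a)
        _ ≤ ∑ s, ∑ a, (Adv n s a) ^ 2 :=
            Finset.single_le_sum (f := fun s => ∑ a, (Adv n s a) ^ 2)
              (fun i _ => Finset.sum_nonneg fun j _ => sq_nonneg _) (Finset.mem_univ s)
    have h2 : |Adv n s a| ≤ frobNorm (Adv n) := by
      rw [← Real.sqrt_sq_eq_abs]
      exact Real.sqrt_le_sqrt h1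
    exact h2.trans hle
  rw [sub_nonpos]
  have key : ∀ s, ∑ a, π' s a * Adv n s a ≤ 2 * C * dTV (π s) (π' s) := by
    intro s
    have h0 : ∑ a, π' s a * Adv n s a = ∑ a, (π' s a - π s a) * Adv n s a := by
      rw [Finset.sum_congr rfl (fun a _ => by ring : ∀ a ∈ Finset.univ,
        (π' s a - π s a) * Adv n s a = π' s a * Adv n s a - π s a * Adv n s a)]
      rw [Finset.sum_sub_distrib, hAdv n s, sub_zero]
    rw [h0]
    calc ∑ a, (π' s a - π s a) * Adv n s a
        ≤ ∑ a, |π' s a - π s a| * C := by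
          apply Finset.sum_le_sum
          intro a _
          calc (π' s a - π s a) * Adv n s a ≤ |(π' s a - π s a) * Adv n s a| := le_abs_self _
            _ = |π' s a - π s a| * |Adv n s a| := abs_mul _ _
            _ ≤ |π' s a - π s a| * C := mul_le_mul_of_nonneg_left (habs s a) (abs_nonneg _)
      _ = 2 * C * dTV (π s) (π' s) := by
          unfold dTV
          rw [← Finset.sum_mul]
          have : ∑ a, |π s a - π' s a| = ∑ a, |π' s a - π s a| :=
            Finset.sum_congr rfl fun a _ => abs_sub_comm _ _
          rw [this]; ring
  calc policyAdv (ρ n) (Adv n) π'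
      ≤ ∑ s, ρ n s * (2 * C * dTV (π s) (π' s)) := by
        apply Finset.sum_le_sum
        intro s _
        exact mul_le_mul_of_nonneg_left (key s) (hρ n s).le
    _ = 2 * C * ∑ s, ρ n s * dTV (π s) (π' s) := by
        rw [Finset.mul_sum]
        exact Finset.sum_congr rfl fun s _ => by ring
end

section
/- (Corollary 2) Fix γ ∈ (0,1), a reference policy π, and an agent index n. For each agent k let ε_k = max_{s,a} |A_k(s,a)| and c_k = 4ε_kγ/(1−γ)², and suppose the local return function η_k : (policies) → ℝ satisfies, for every policy π′, the per-agent policy-improvement bound η_k(π′) ≥ η_k(π) + 𝔸_k(π′) − c_k · Σ_{s∈S} ρ_k(s) · D_TV(π(·|s) ‖ π′(·|s)). Then for every policy π′: Σ_{k=1}^N q_k η_k(π′) ≥ Σ_{k=1}^N q_k η_k(π) + 𝔸_n(π′) − (α + β) · Σ_{s∈S} ρ_n(s) · D_TV(π(·|s) ‖ π′(·|s)) − δ · D_TV^max(π, π′), where α = 2‖B_n‖_F, β = Σ_{k=1}^N q_k c_k, δ = 2 Σ_{k=1}^N q_k c_k · D_TV(ρ_k ‖ ρ_n), D_TV^max(π,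 π′) = max_{s∈S} D_TV(π(·|s) ‖ π′(·|s)) and D_TV(ρ_k ‖ ρ_n) = (1/2) Σ_{s∈S} |ρ_k(s) − ρ_n(s)|. -/
open Finset

/-- `D_TV^max(π,π') = max_s D_TV(π(·|s) ‖ π'(·|s))`. -/
noncomputable def dTVmax {S A : Type*} [Fintype S] [Fintype A] [Nonempty S]
    (π π' : S → A → ℝ) : ℝ :=
  Finset.univ.sup' Finset.univ_nonempty (fun s => dTV (π s) (π' s))

/-- `ε = max_{s,a} |A(s,a)|`. -/
noncomputable def maxAbs {S A : Type*} [Fintype S] [Fintype A] [Nonempty S]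
    [Nonempty A] (M : S → A → ℝ) : ℝ :=
  Finset.univ.sup' Finset.univ_nonempty (fun p : S × A => |M p.1 p.2|)

/-- `c = 4εγ/(1−γ)²`. -/
noncomputable def cCoef {S A : Type*} [Fintype S] [Fintype A] [Nonempty S]
    [Nonempty A] (γ : ℝ) (M : S → A → ℝ) : ℝ :=
  4 * maxAbs M * γ / (1 - γ) ^ 2

private lemma swap_mul {S' K : Type*} [Fintype S'] [Fintype K]
    (f : S' → ℝ) (g : K → ℝ) (h : K → S' → ℝ) :
    ∑ a, f a * ∑ k, g k * h k a = ∑ k, g k * ∑ a, f a * h k a := by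
  calc ∑ a, f a * ∑ k, g k * h k a
      = ∑ a, ∑ k, g k * (f a * h k a) := by
        refine Finset.sum_congr rfl fun a _ => ?_
        rw [Finset.mul_sum]
        exact Finset.sum_congr rfl fun k _ => by ring
    _ = ∑ k, ∑ a, g k * (f a * h k a) := Finset.sum_comm
    _ = ∑ k, g k * ∑ a, f a * h k a := by
        exact Finset.sum_congr rfl fun k _ => by rw [Finset.mul_sum]

/-- Corollary 2: relation between the global objective and the
local update.  With `α = 2‖B_n‖_F`, `β = Σ_k q_k c_k` and
`δ = 2 Σ_k q_k c_k D_TV(ρ_k‖ρ_n)`,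
`Σ_k q_k η_k(π') ≥ Σ_k q_k η_k(π) + 𝔸_n(π')
  − (α+β) Σ_s ρ_n(s) D_TV(π(·|s)‖π'(·|s)) − δ D_TV^max(π,π')`. -/
theorem corollary2 {S A : Type*} [Fintype S] [Fintype A] [Nonempty S]
    [Nonempty A]
    (N : ℕ) (q : Fin N → ℝ) (hq : ∀ k, 0 ≤ q k) (hqsum : ∑ k, q k = 1)
    (γ : ℝ) (hγ0 : 0 < γ) (hγ1 : γ < 1)
    (π : S → A → ℝ) (hπ : IsPolicy π)
    (ρ : Fin N → S → ℝ) (hρ : ∀ k s, 0 < ρ k s)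
    (Adv : Fin N → S → A → ℝ)
    (hAdv : ∀ k s, ∑ a, π s a * Adv k s a = 0)
    (η : Fin N → (S → A → ℝ) → ℝ)
    (hη : ∀ k, ∀ π' : S → A → ℝ, IsPolicy π' →
      η k π' ≥ η k π + policyAdv (ρ k) (Adv k) π'
        - cCoef γ (Adv k) * ∑ s, ρ k s * dTV (π s) (π' s))
    (n : Fin N) (π' : S → A → ℝ) (hπ' : IsPolicy π') :
    ∑ k, q k * η k π'
      ≥ (∑ k, q k * η k π)
        + policyAdv (ρ n) (Adv n) π'
        - (2 * frobNorm (hetMat N q ρ Adv n) + ∑ k, q k * cCoef γ (Adv k))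
          * ∑ s, ρ n s * dTV (π s) (π' s)
        - (2 * ∑ k, q k * cCoef γ (Adv k)
            * ((1 / 2) * ∑ s, |ρ k s - ρ n s|))
          * dTVmax π π' := by
  classical
  set B : S → A → ℝ := hetMat N q ρ Adv n with hBdef
  set D : S → ℝ := fun s => dTV (π s) (π' s) with hDdef
  set F : ℝ := frobNorm B with hFdef
  set Dmax : ℝ := dTVmax π π' with hDmaxdef
  have hDnn : ∀ s, 0 ≤ D s := by
    intro s
    show (0:ℝ) ≤ dTV (π s) (π' s)
    unfold dTV
    positivity
  have hDle : ∀ s, D s ≤ Dmax := fun s => Finset.le_sup' _ (Finset.mem_univ s)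
  have hDmaxnn : 0 ≤ Dmax :=
    le_trans (hDnn (Classical.arbitrary S)) (hDle _)
  have hcnn : ∀ k : Fin N, 0 ≤ cCoef γ (Adv k) := by
    intro k
    have h1 : 0 ≤ maxAbs (Adv k) := by
      obtain ⟨p⟩ := (inferInstance : Nonempty (S × A))
      exact le_trans (abs_nonneg (Adv k p.1 p.2))
        (Finset.le_sup' (fun p : S × A => |Adv k p.1 p.2|) (Finset.mem_univ p))
    unfold cCoef
    positivity
  have hFnn : 0 ≤ F := Real.sqrt_nonneg _
  have hBle : ∀ s a, |B s a| ≤ F := by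
    intro s a
    have h1 : B s a ^ 2 ≤ ∑ s', ∑ a', B s' a' ^ 2 := by
      calc B s a ^ 2 ≤ ∑ a', B s a' ^ 2 :=
            Finset.single_le_sum (f := fun a' => B s a' ^ 2)
              (fun a' _ => sq_nonneg _) (Finset.mem_univ a)
        _ ≤ ∑ s', ∑ a', B s' a' ^ 2 :=
            Finset.single_le_sum (f := fun s' => ∑ a', B s' a' ^ 2)
              (fun s' _ => Finset.sum_nonneg fun a' _ => sq_nonneg _)
              (Finset.mem_univ s)
    have h2 := Real.sqrt_le_sqrt h1
    rwa [Real.sqrt_sq_eq_abs] at h2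
  -- π kills B
  have h0 : ∀ s, ∑ a, π s a * B s a = 0 := by
    intro s
    have hE : ∑ a, π s a * B s a
        = (∑ a, π s a * ∑ k, q k * (ρ k s / ρ n s) * Adv k s a)
          - ∑ a, π s a * Adv n s a := by
      simp only [hBdef, hetMat, mul_sub, Finset.sum_sub_distrib]
    rw [hE, swap_mul (fun a => π s a) (fun k => q k * (ρ k s / ρ n s))
      (fun k a => Adv k s a), hAdv n s, sub_zero]
    simp only [hAdv, mul_zero, Finset.sum_const_zero]
  -- key identity for the weighted policy advantages
  have hI2 : ∑ k, q k * policyAdv (ρ k) (Adv k) π'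
      = policyAdv (ρ n) (Adv n) π' + ∑ s, ρ n s * ∑ a, π' s a * B s a := by
    have hs : ∀ s, ρ n s * ∑ a, π' s a * B s a
        = (∑ k, q k * (ρ k s * ∑ a, π' s a * Adv k s a))
          - ρ n s * ∑ a, π' s a * Adv n s a := by
      intro s
      have hrne : ρ n s ≠ 0 := (hρ n s).ne'
      have hE : ∑ a, π' s a * B s a
          = (∑ a, π' s a * ∑ k, q k * (ρ k s / ρ n s) * Adv k s a)
            - ∑ a, π' s a * Adv n s a := by
        simp only [hBdef, hetMat, mul_sub, Finset.sum_sub_distrib]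
      rw [hE, swap_mul (fun a => π' s a) (fun k => q k * (ρ k s / ρ n s))
        (fun k a => Adv k s a), mul_sub, Finset.mul_sum]
      congr 1
      exact Finset.sum_congr rfl fun k _ => by field_simp
    have hL : ∑ k, q k * policyAdv (ρ k) (Adv k) π'
        = ∑ s, ∑ k, q k * (ρ k s * ∑ a, π' s a * Adv k s a) := by
      simp only [policyAdv, Finset.mul_sum]
      exact Finset.sum_comm
    rw [hL]
    simp only [hs, Finset.sum_sub_distrib, policyAdv]
    ring
  -- per-state bound on the heterogeneity term
  have hRs : ∀ s, |∑ a, π' s a * B s a| ≤ 2 * F * D s := by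
    intro s
    have hE : ∑ a, π' s a * B s a = ∑ a, (π' s a - π s a) * B s a := by
      simp only [sub_mul, Finset.sum_sub_distrib, h0 s, sub_zero]
    rw [hE]
    calc |∑ a, (π' s a - π s a) * B s a|
        ≤ ∑ a, |(π' s a - π s a) * B s a| := Finset.abs_sum_le_sum_abs _ _
      _ ≤ ∑ a, |π' s a - π s a| * F := by
          refine Finset.sum_le_sum fun a _ => ?_
          rw [abs_mul]
          exact mul_le_mul_of_nonneg_left (hBle s a) (abs_nonneg _)
      _ = 2 * F * D s := by
          show _ = 2 * F * dTV (π s) (π' s)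
          unfold dTV
          rw [← Finset.sum_mul]
          have h3 : ∑ a, |π' s a - π s a| = ∑ a, |π s a - π' s a| :=
            Finset.sum_congr rfl fun a _ => abs_sub_comm _ _
          rw [h3]; ring
  set Ssum : ℝ := ∑ s, ρ n s * D s with hSsumdef
  have hSnn : 0 ≤ Ssum :=
    Finset.sum_nonneg fun s _ => mul_nonneg (hρ n s).le (hDnn s)
  -- fact (3): the remainder term bound
  have hI3 : ∑ s, ρ n s * ∑ a, π' s a * B s a ≥ -(2 * F * Ssum) := by
    have h1 : ∑ s, -(ρ n s * (2 * F * D s)) ≤ ∑ s, ρ n s * ∑ a, π' s a * B s a := by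
      refine Finset.sum_le_sum fun s _ => ?_
      have h := (abs_le.mp (hRs s)).1
      have h2 := mul_le_mul_of_nonneg_left h (hρ n s).le
      calc -(ρ n s * (2 * F * D s)) = ρ n s * -(2 * F * D s) := by ring
        _ ≤ _ := h2
    have h2 : ∑ s, -(ρ n s * (2 * F * D s)) = -(2 * F * Ssum) := by
      rw [Finset.sum_neg_distrib]
      congr 1
      rw [hSsumdef, Finset.mul_sum]
      exact Finset.sum_congr rfl fun s _ => by ring
    linarith [h1, h2.symm.le, h2.le]
  -- fact (4)
  set β : ℝ := ∑ k, q k * cCoef γ (Adv k) with hβ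
  set δ' : ℝ := ∑ k, q k * cCoef γ (Adv k) * ∑ s, |ρ k s - ρ n s| with hδ'
  have hI4 : ∑ k, q k * (cCoef γ (Adv k) * ∑ s, ρ k s * D s)
      ≤ β * Ssum + δ' * Dmax := by
    have hk : ∀ k : Fin N,
        ∑ s, ρ k s * D s ≤ Ssum + (∑ s, |ρ k s - ρ n s|) * Dmax := by
      intro k
      rw [hSsumdef, Finset.sum_mul, ← Finset.sum_add_distrib]
      refine Finset.sum_le_sum fun s _ => ?_
      have h1 : ρ k s ≤ ρ n s + |ρ k s - ρ n s| := by
        have := le_abs_self (ρ k s - ρ n s); linarith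
      have h2 : ρ k s * D s ≤ (ρ n s + |ρ k s - ρ n s|) * D s :=
        mul_le_mul_of_nonneg_right h1 (hDnn s)
      have h3 : |ρ k s - ρ n s| * D s ≤ |ρ k s - ρ n s| * Dmax :=
        mul_le_mul_of_nonneg_left (hDle s) (abs_nonneg _)
      nlinarith
    calc ∑ k, q k * (cCoef γ (Adv k) * ∑ s, ρ k s * D s)
        ≤ ∑ k, (q k * cCoef γ (Adv k) * Ssum
            + q k * cCoef γ (Adv k) * (∑ s, |ρ k s - ρ n s|) * Dmax) := by
          refine Finset.sum_le_sum fun k _ => ?_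
          have hqc : 0 ≤ q k * cCoef γ (Adv k) := mul_nonneg (hq k) (hcnn k)
          have h5 := mul_le_mul_of_nonneg_left (hk k) hqc
          nlinarith [h5]
      _ = β * Ssum + δ' * Dmax := by
          rw [Finset.sum_add_distrib, hβ, hδ', Finset.sum_mul, Finset.sum_mul]
  -- fact (1)
  have hI1 : ∑ k, q k * η k π'
      ≥ (∑ k, q k * η k π) + (∑ k, q k * policyAdv (ρ k) (Adv k) π')
        - ∑ k, q k * (cCoef γ (Adv k) * ∑ s, ρ k s * D s) := by
    rw [← Finset.sum_add_distrib, ← Finset.sum_sub_distrib]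
    refine Finset.sum_le_sum fun k _ => ?_
    have h := hη k π' hπ'
    have h2 := mul_le_mul_of_nonneg_left h (hq k)
    have h3 : q k * (η k π + policyAdv (ρ k) (Adv k) π'
        - cCoef γ (Adv k) * ∑ s, ρ k s * dTV (π s) (π' s))
        = q k * η k π + q k * policyAdv (ρ k) (Adv k) π'
          - q k * (cCoef γ (Adv k) * ∑ s, ρ k s * dTV (π s) (π' s)) := by ring
    have h4 : ∑ s, ρ k s * D s = ∑ s, ρ k s * dTV (π s) (π' s) := rfl
    rw [h4]
    linarith [h2, h3]
  -- δ rewriting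
  have hδeq : (2 * ∑ k, q k * cCoef γ (Adv k) * ((1 / 2) * ∑ s, |ρ k s - ρ n s|)) = δ' := by
    rw [hδ', Finset.mul_sum]
    exact Finset.sum_congr rfl fun k _ => by ring
  have hfin : (2 * F + β) * Ssum = 2 * F * Ssum + β * Ssum := by ring
  have hmain := hI1
  rw [hI2] at hmain
  rw [hδeq]
  linarith [hI3, hI4, hmain, hfin]
end

section
/- (Key inequality in the proof of Theorem 2) Fix γ ∈ (0,1) and a reference policy π. For each agent n let ε_n = max_{s,a} |A_n(s,a)| and c_n = 4ε_nγ/(1−γ)², and suppose the local return η_n : (policies) → ℝ satisfies, for every policy π′, η_n(π′) ≥ η_n(π) + 𝔸_n(π′) − c_n · Σ_{s∈S} ρ_n(s) · D_TV(π(·|s) ‖ π′(·|s)). For each agent k define the penalized local objective h_k(σ) = 𝔸_k(σ) − (α_k + β) · Σ_{s∈S} ρ_k(s) · D_TV(π(·|s) ‖ σ(·|s)) − δ_k · max_{s∈S} D_TV(π(·|s) ‖ σ(·|s)), where α_k = 2‖B_k‖_F (the heterogeneity matrix B_k being taken with reference agent k), β = Σ_{n=1}^N q_n c_n, and δ_k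 = 2 Σ_{n=1}^N q_n c_n · (1/2) Σ_{s∈S} |ρ_n(s) − ρ_k(s)|. Then for any local policies π_1, …, π_N and the aggregated policy π̄(a|s) = Σ_{k=1}^N q_k π_k(a|s): Σ_{n=1}^N q_n η_n(π̄) ≥ Σ_{n=1}^N q_n η_n(π) + Σ_{k=1}^N q_k h_k(π_k). -/
open Finset

/-- The penalized local objective `h_k` of agent `k`:
`h_k(σ) = 𝔸_k(σ) − (α_k + β) Σ_s ρ_k(s) D_TV(π(·|s)‖σ(·|s))
  − δ_k D_TV^max(π,σ)`, where `α_k = 2‖B_k‖_F`, `β = Σ_n q_n c_n` and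
`δ_k = 2 Σ_n q_n c_n (1/2) Σ_s |ρ_n(s) − ρ_k(s)|`. -/
noncomputable def hObj {S A : Type*} [Fintype S] [Fintype A] [Nonempty S]
    [Nonempty A] (N : ℕ) (q : Fin N → ℝ) (γ : ℝ) (π : S → A → ℝ)
    (ρ : Fin N → S → ℝ) (Adv : Fin N → S → A → ℝ) (k : Fin N)
    (σ : S → A → ℝ) : ℝ :=
  policyAdv (ρ k) (Adv k) σ
    - (2 * frobNorm (hetMat N q ρ Adv k) + ∑ n, q n * cCoef γ (Adv n))
      * ∑ s, ρ k s * dTV (π s) (σ s)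
    - (2 * ∑ n, q n * cCoef γ (Adv n) * ((1 / 2) * ∑ s, |ρ n s - ρ k s|))
      * dTVmax π σ

lemma my_dTV_nonneg {A : Type*} [Fintype A] (p q : A → ℝ) : 0 ≤ dTV p q := by
  unfold dTV; positivity

lemma my_dTV_le_dTVmax {S A : Type*} [Fintype S] [Fintype A] [Nonempty S]
    (π π' : S → A → ℝ) (s : S) : dTV (π s) (π' s) ≤ dTVmax π π' :=
  Finset.le_sup' (fun s => dTV (π s) (π' s)) (Finset.mem_univ s)

lemma my_abs_le_frobNorm {S A : Type*} [Fintype S] [Fintype A]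
    (M : S → A → ℝ) (s : S) (a : A) : |M s a| ≤ frobNorm M := by
  apply Real.abs_le_sqrt
  calc M s a ^ 2 ≤ ∑ a', (M s a') ^ 2 :=
        Finset.single_le_sum (f := fun a' => M s a' ^ 2)
          (fun _ _ => sq_nonneg _) (Finset.mem_univ a)
    _ ≤ ∑ s', ∑ a', (M s' a') ^ 2 :=
        Finset.single_le_sum (f := fun s' => ∑ a', (M s' a') ^ 2)
          (fun _ _ => Finset.sum_nonneg fun _ _ => sq_nonneg _)
          (Finset.mem_univ s)

lemma my_maxAbs_nonneg {S A : Type*} [Fintype S] [Fintype A] [Nonempty S]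
    [Nonempty A] (M : S → A → ℝ) : 0 ≤ maxAbs M := by
  obtain ⟨s⟩ := (inferInstance : Nonempty S)
  obtain ⟨a⟩ := (inferInstance : Nonempty A)
  exact le_trans (abs_nonneg (M s a))
    (Finset.le_sup' (fun p : S × A => |M p.1 p.2|) (Finset.mem_univ (s, a)))

lemma my_cCoef_nonneg {S A : Type*} [Fintype S] [Fintype A] [Nonempty S]
    [Nonempty A] (γ : ℝ) (hγ : 0 ≤ γ) (M : S → A → ℝ) : 0 ≤ cCoef γ M := by
  unfold cCoef
  have := my_maxAbs_nonneg M
  apply div_nonneg (by nlinarith) (sq_nonneg _)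


/-- key inequality in the proof of Theorem 2:
`Σ_n q_n η_n(π̄) ≥ Σ_n q_n η_n(π) + Σ_k q_k h_k(π_k)` where
`π̄ = Σ_k q_k π_k` is the aggregated policy. -/
theorem key_inequality {S A : Type*} [Fintype S] [Fintype A] [Nonempty S]
    [Nonempty A]
    (N : ℕ) (q : Fin N → ℝ) (hq : ∀ k, 0 ≤ q k) (hqsum : ∑ k, q k = 1)
    (γ : ℝ) (hγ0 : 0 < γ) (hγ1 : γ < 1)
    (π : S → A → ℝ) (hπ : IsPolicy π)
    (ρ : Fin N → S → ℝ) (hρ : ∀ k s, 0 < ρ k s)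
    (Adv : Fin N → S → A → ℝ)
    (hAdv : ∀ k s, ∑ a, π s a * Adv k s a = 0)
    (η : Fin N → (S → A → ℝ) → ℝ)
    (hη : ∀ n, ∀ π' : S → A → ℝ, IsPolicy π' →
      η n π' ≥ η n π + policyAdv (ρ n) (Adv n) π'
        - cCoef γ (Adv n) * ∑ s, ρ n s * dTV (π s) (π' s))
    (πs : Fin N → S → A → ℝ) (hπs : ∀ k, IsPolicy (πs k)) :
    ∑ n, q n * η n (fun s a => ∑ k, q k * πs k s a)
      ≥ (∑ n, q n * η n π)
        + ∑ k, q k * hObj N q γ π ρ Adv k (πs k) := by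
  classical
  set πbar : S → A → ℝ := fun s a => ∑ k, q k * πs k s a with hπb
  have hπbar : IsPolicy πbar := by
    intro s
    constructor
    · intro a
      exact Finset.sum_nonneg fun k _ => mul_nonneg (hq k) ((hπs k s).1 a)
    · calc ∑ a, πbar s a = ∑ a, ∑ k, q k * πs k s a := rfl
        _ = ∑ k, ∑ a, q k * πs k s a := Finset.sum_comm
        _ = ∑ k, q k * ∑ a, πs k s a := by
              exact Finset.sum_congr rfl fun k _ => (Finset.mul_sum _ _ _).symm
        _ = ∑ k, q k := Finset.sum_congr rfl fun k _ => by rw [(hπs k s).2, mul_one]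
        _ = 1 := hqsum
  -- Step 1: apply hη at πbar
  have sum1 : ∑ n, q n * η n πbar
      ≥ ∑ n, q n * (η n π + policyAdv (ρ n) (Adv n) πbar
          - cCoef γ (Adv n) * ∑ s, ρ n s * dTV (π s) (πbar s)) :=
    Finset.sum_le_sum fun n _ => mul_le_mul_of_nonneg_left (hη n πbar hπbar) (hq n)
  have split : ∑ n, q n * (η n π + policyAdv (ρ n) (Adv n) πbar
          - cCoef γ (Adv n) * ∑ s, ρ n s * dTV (π s) (πbar s))
      = (∑ n, q n * η n π) + (∑ n, q n * policyAdv (ρ n) (Adv n) πbar)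
        - ∑ n, q n * (cCoef γ (Adv n) * ∑ s, ρ n s * dTV (π s) (πbar s)) := by
    rw [← Finset.sum_add_distrib, ← Finset.sum_sub_distrib]
    exact Finset.sum_congr rfl fun n _ => by ring
  -- Step 2: rewrite the aggregated policy advantage
  have hA1 : ∑ n, q n * policyAdv (ρ n) (Adv n) πbar
      = ∑ s, ∑ a, (∑ n, q n * ρ n s * Adv n s a) * (∑ k, q k * πs k s a) := by
    simp only [policyAdv, hπb, Finset.mul_sum, Finset.sum_mul]
    conv_lhs => rw [Finset.sum_comm]
    refine Finset.sum_congr rfl fun s _ => ?_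
    conv_lhs => rw [Finset.sum_comm]
    refine Finset.sum_congr rfl fun a _ => ?_
    conv_lhs => rw [Finset.sum_comm]
    exact Finset.sum_congr rfl fun k _ => Finset.sum_congr rfl fun n _ => by ring
  have hA2 : ∑ k, q k * (∑ s, ρ k s * ∑ a, πs k s a
        * (∑ n, q n * (ρ n s / ρ k s) * Adv n s a))
      = ∑ s, ∑ a, (∑ n, q n * ρ n s * Adv n s a) * (∑ k, q k * πs k s a) := by
    simp only [Finset.mul_sum, Finset.sum_mul]
    conv_lhs => rw [Finset.sum_comm]
    refine Finset.sum_congr rfl fun s _ => ?_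
    conv_lhs => rw [Finset.sum_comm]
    refine Finset.sum_congr rfl fun a _ => ?_
    refine Finset.sum_congr rfl fun k _ => Finset.sum_congr rfl fun n _ => ?_
    have h := (hρ k s).ne'
    field_simp
  have hHet : ∀ k, ∑ s, ρ k s * ∑ a, πs k s a
        * (∑ n, q n * (ρ n s / ρ k s) * Adv n s a)
      = policyAdv (ρ k) (Adv k) (πs k)
        + ∑ s, ρ k s * ∑ a, πs k s a * hetMat N q ρ Adv k s a := by
    intro k
    simp only [policyAdv, hetMat]
    rw [← Finset.sum_add_distrib]
    refine Finset.sum_congr rfl fun s _ => ?_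
    rw [← mul_add, ← Finset.sum_add_distrib]
    exact congrArg (ρ k s * ·) (Finset.sum_congr rfl fun a _ => by ring)
  have hA : ∑ n, q n * policyAdv (ρ n) (Adv n) πbar
      = ∑ k, q k * (policyAdv (ρ k) (Adv k) (πs k)
          + ∑ s, ρ k s * ∑ a, πs k s a * hetMat N q ρ Adv k s a) := by
    rw [hA1, ← hA2]
    exact Finset.sum_congr rfl fun k _ => by rw [hHet k]
  -- Step 3: bound the B-term
  have hBzero : ∀ k s, ∑ a, π s a * hetMat N q ρ Adv k s a = 0 := by
    intro k s
    simp only [hetMat, mul_sub]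
    rw [Finset.sum_sub_distrib, hAdv k s, sub_zero]
    simp only [Finset.mul_sum]
    rw [Finset.sum_comm]
    apply Finset.sum_eq_zero
    intro n _
    calc ∑ a, π s a * (q n * (ρ n s / ρ k s) * Adv n s a)
        = q n * (ρ n s / ρ k s) * ∑ a, π s a * Adv n s a := by
          rw [Finset.mul_sum]; exact Finset.sum_congr rfl fun a _ => by ring
      _ = 0 := by rw [hAdv n s, mul_zero]
  have hBbound : ∀ k s,
      -(2 * frobNorm (hetMat N q ρ Adv k) * dTV (π s) (πs k s))
        ≤ ∑ a, πs k s a * hetMat N q ρ Adv k s a := by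
    intro k s
    have heq : ∑ a, πs k s a * hetMat N q ρ Adv k s a
        = ∑ a, (πs k s a - π s a) * hetMat N q ρ Adv k s a := by
      rw [show (∑ a, (πs k s a - π s a) * hetMat N q ρ Adv k s a)
          = ∑ a, (πs k s a * hetMat N q ρ Adv k s a
              - π s a * hetMat N q ρ Adv k s a) from
        Finset.sum_congr rfl fun a _ => by ring]
      rw [Finset.sum_sub_distrib, hBzero k s, sub_zero]
    rw [heq]
    have hterm : ∀ a : A,
        -(|πs k s a - π s a| * frobNorm (hetMat N q ρ Adv k))
          ≤ (πs k s a - π s a) * hetMat N q ρ Adv k s a := by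
      intro a
      have h1 : |(πs k s a - π s a) * hetMat N q ρ Adv k s a|
          ≤ |πs k s a - π s a| * frobNorm (hetMat N q ρ Adv k) := by
        rw [abs_mul]
        exact mul_le_mul_of_nonneg_left (my_abs_le_frobNorm _ s a) (abs_nonneg _)
      have h2 := neg_abs_le ((πs k s a - π s a) * hetMat N q ρ Adv k s a)
      linarith
    calc -(2 * frobNorm (hetMat N q ρ Adv k) * dTV (π s) (πs k s))
        = ∑ a, -(|πs k s a - π s a| * frobNorm (hetMat N q ρ Adv k)) := by
          simp only [dTV]
          rw [Finset.sum_neg_distrib, neg_inj, ← Finset.sum_mul,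
            show (∑ a, |πs k s a - π s a|) = ∑ a, |π s a - πs k s a| from
              Finset.sum_congr rfl fun a _ => abs_sub_comm _ _]
          ring
      _ ≤ ∑ a, (πs k s a - π s a) * hetMat N q ρ Adv k s a :=
          Finset.sum_le_sum fun a _ => hterm a
  have hR : ∀ k, -(2 * frobNorm (hetMat N q ρ Adv k)
        * ∑ s, ρ k s * dTV (π s) (πs k s))
      ≤ ∑ s, ρ k s * ∑ a, πs k s a * hetMat N q ρ Adv k s a := by
    intro k
    calc -(2 * frobNorm (hetMat N q ρ Adv k) * ∑ s, ρ k s * dTV (π s) (πs k s))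
        = ∑ s, ρ k s * -(2 * frobNorm (hetMat N q ρ Adv k) * dTV (π s) (πs k s)) := by
          rw [Finset.mul_sum, ← Finset.sum_neg_distrib]
          exact Finset.sum_congr rfl fun s _ => by ring
      _ ≤ ∑ s, ρ k s * ∑ a, πs k s a * hetMat N q ρ Adv k s a :=
          Finset.sum_le_sum fun s _ =>
            mul_le_mul_of_nonneg_left (hBbound k s) (hρ k s).le
  -- Step 4: convexity of TV
  have hconv : ∀ s, dTV (π s) (πbar s) ≤ ∑ k, q k * dTV (π s) (πs k s) := by
    intro s
    simp only [dTV, hπb]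
    have hpt : ∀ a, |π s a - ∑ k, q k * πs k s a|
        ≤ ∑ k, q k * |π s a - πs k s a| := by
      intro a
      have he : π s a - ∑ k, q k * πs k s a = ∑ k, q k * (π s a - πs k s a) := by
        simp only [mul_sub]
        rw [Finset.sum_sub_distrib, ← Finset.sum_mul, hqsum, one_mul]
      rw [he]
      calc |∑ k, q k * (π s a - πs k s a)| ≤ ∑ k, |q k * (π s a - πs k s a)| :=
            Finset.abs_sum_le_sum_abs _ _
        _ = ∑ k, q k * |π s a - πs k s a| :=
            Finset.sum_congr rfl fun k _ => by rw [abs_mul, abs_of_nonneg (hq k)]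
    calc (1 : ℝ) / 2 * ∑ a, |π s a - ∑ k, q k * πs k s a|
        ≤ 1 / 2 * ∑ a, ∑ k, q k * |π s a - πs k s a| := by
          have := Finset.sum_le_sum (fun a (_ : a ∈ Finset.univ) => hpt a)
          linarith
      _ = ∑ k, q k * (1 / 2 * ∑ a, |π s a - πs k s a|) := by
          rw [Finset.sum_comm, Finset.mul_sum]
          refine Finset.sum_congr rfl fun k _ => ?_
          rw [Finset.mul_sum, Finset.mul_sum, Finset.mul_sum]
          exact Finset.sum_congr rfl fun a _ => by ring
  -- Step 5: per-agent state-weight comparison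
  have hTn : ∀ n k, ∑ s, ρ n s * dTV (π s) (πs k s)
      ≤ (∑ s, ρ k s * dTV (π s) (πs k s))
        + (∑ s, |ρ n s - ρ k s|) * dTVmax π (πs k) := by
    intro n k
    rw [Finset.sum_mul, ← Finset.sum_add_distrib]
    refine Finset.sum_le_sum fun s _ => ?_
    have hD0 : 0 ≤ dTV (π s) (πs k s) := my_dTV_nonneg _ _
    have hDm : dTV (π s) (πs k s) ≤ dTVmax π (πs k) := my_dTV_le_dTVmax _ _ s
    have habs : ρ n s ≤ ρ k s + |ρ n s - ρ k s| := by
      have := le_abs_self (ρ n s - ρ k s); linarith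
    nlinarith [abs_nonneg (ρ n s - ρ k s)]
  -- Step 6: bound on aggregated TV-penalty
  have hTbar : ∀ n, ∑ s, ρ n s * dTV (π s) (πbar s)
      ≤ ∑ k, q k * ((∑ s, ρ k s * dTV (π s) (πs k s))
          + (∑ s, |ρ n s - ρ k s|) * dTVmax π (πs k)) := by
    intro n
    calc ∑ s, ρ n s * dTV (π s) (πbar s)
        ≤ ∑ s, ρ n s * ∑ k, q k * dTV (π s) (πs k s) :=
          Finset.sum_le_sum fun s _ =>
            mul_le_mul_of_nonneg_left (hconv s) (hρ n s).le
      _ = ∑ k, q k * ∑ s, ρ n s * dTV (π s) (πs k s) := by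
          simp only [Finset.mul_sum]
          rw [Finset.sum_comm]
          exact Finset.sum_congr rfl fun k _ =>
            Finset.sum_congr rfl fun s _ => by ring
      _ ≤ ∑ k, q k * ((∑ s, ρ k s * dTV (π s) (πs k s))
            + (∑ s, |ρ n s - ρ k s|) * dTVmax π (πs k)) :=
          Finset.sum_le_sum fun k _ =>
            mul_le_mul_of_nonneg_left (hTn n k) (hq k)
  have hc0 : ∀ n : Fin N, 0 ≤ cCoef γ (Adv n) := fun n => my_cCoef_nonneg γ hγ0.le _
  have hpen : ∑ n, q n * (cCoef γ (Adv n) * ∑ s, ρ n s * dTV (π s) (πbar s))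
      ≤ ∑ k, q k * ((∑ n, q n * cCoef γ (Adv n)) * (∑ s, ρ k s * dTV (π s) (πs k s))
          + (∑ n, q n * cCoef γ (Adv n) * ∑ s, |ρ n s - ρ k s|) * dTVmax π (πs k)) := by
    calc ∑ n, q n * (cCoef γ (Adv n) * ∑ s, ρ n s * dTV (π s) (πbar s))
        ≤ ∑ n, q n * (cCoef γ (Adv n) * ∑ k, q k * ((∑ s, ρ k s * dTV (π s) (πs k s))
            + (∑ s, |ρ n s - ρ k s|) * dTVmax π (πs k))) :=
          Finset.sum_le_sum fun n _ =>
            mul_le_mul_of_nonneg_left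
              (mul_le_mul_of_nonneg_left (hTbar n) (hc0 n)) (hq n)
      _ = ∑ k, q k * ((∑ n, q n * cCoef γ (Adv n)) * (∑ s, ρ k s * dTV (π s) (πs k s))
            + (∑ n, q n * cCoef γ (Adv n) * ∑ s, |ρ n s - ρ k s|) * dTVmax π (πs k)) := by
          have hswap : ∀ k : Fin N,
              q k * ((∑ n, q n * cCoef γ (Adv n)) * (∑ s, ρ k s * dTV (π s) (πs k s))
                + (∑ n, q n * cCoef γ (Adv n) * ∑ s, |ρ n s - ρ k s|) * dTVmax π (πs k))
              = ∑ n, q n * (cCoef γ (Adv n)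
                  * (q k * ((∑ s, ρ k s * dTV (π s) (πs k s))
                      + (∑ s, |ρ n s - ρ k s|) * dTVmax π (πs k)))) := by
            intro k
            rw [Finset.sum_mul, Finset.sum_mul, ← Finset.sum_add_distrib,
              Finset.mul_sum]
            exact Finset.sum_congr rfl fun n _ => by ring
          calc ∑ n, q n * (cCoef γ (Adv n)
                * ∑ k, q k * ((∑ s, ρ k s * dTV (π s) (πs k s))
                    + (∑ s, |ρ n s - ρ k s|) * dTVmax π (πs k)))
              = ∑ n, ∑ k, q n * (cCoef γ (Adv n)
                  * (q k * ((∑ s, ρ k s * dTV (π s) (πs k s))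
                      + (∑ s, |ρ n s - ρ k s|) * dTVmax π (πs k)))) := by
                refine Finset.sum_congr rfl fun n _ => ?_
                rw [Finset.mul_sum, Finset.mul_sum]
            _ = ∑ k, ∑ n, q n * (cCoef γ (Adv n)
                  * (q k * ((∑ s, ρ k s * dTV (π s) (πs k s))
                      + (∑ s, |ρ n s - ρ k s|) * dTVmax π (πs k)))) := Finset.sum_comm
            _ = ∑ k, q k * ((∑ n, q n * cCoef γ (Adv n)) * (∑ s, ρ k s * dTV (π s) (πs k s))
                  + (∑ n, q n * cCoef γ (Adv n) * ∑ s, |ρ n s - ρ k s|) * dTVmax π (πs k)) :=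
                Finset.sum_congr rfl fun k _ => (hswap k).symm
  -- Final assembly
  simp only [hObj]
  have hδ : ∀ k : Fin N,
      (2 * ∑ n, q n * cCoef γ (Adv n) * (1 / 2 * ∑ s, |ρ n s - ρ k s|))
        = ∑ n, q n * cCoef γ (Adv n) * ∑ s, |ρ n s - ρ k s| := by
    intro k
    rw [Finset.mul_sum]
    exact Finset.sum_congr rfl fun n _ => by ring
  have hmid : ∑ k, q k * (policyAdv (ρ k) (Adv k) (πs k)
        + ∑ s, ρ k s * ∑ a, πs k s a * hetMat N q ρ Adv k s a)
      ≥ ∑ k, q k * (policyAdv (ρ k) (Adv k) (πs k)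
        - 2 * frobNorm (hetMat N q ρ Adv k) * ∑ s, ρ k s * dTV (π s) (πs k s)) :=
    Finset.sum_le_sum fun k _ =>
      mul_le_mul_of_nonneg_left (by have := hR k; linarith) (hq k)
  have hmerge : (∑ k, q k * (policyAdv (ρ k) (Adv k) (πs k)
        - 2 * frobNorm (hetMat N q ρ Adv k) * ∑ s, ρ k s * dTV (π s) (πs k s)))
      - (∑ k, q k * ((∑ n, q n * cCoef γ (Adv n)) * (∑ s, ρ k s * dTV (π s) (πs k s))
          + (∑ n, q n * cCoef γ (Adv n) * ∑ s, |ρ n s - ρ k s|) * dTVmax π (πs k)))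
      = ∑ k, q k * (policyAdv (ρ k) (Adv k) (πs k)
          - (2 * frobNorm (hetMat N q ρ Adv k) + ∑ n, q n * cCoef γ (Adv n))
            * ∑ s, ρ k s * dTV (π s) (πs k s)
          - (2 * ∑ n, q n * cCoef γ (Adv n) * (1 / 2 * ∑ s, |ρ n s - ρ k s|))
            * dTVmax π (πs k)) := by
    rw [← Finset.sum_sub_distrib]
    refine Finset.sum_congr rfl fun k _ => ?_
    rw [hδ k]
    ring
  have := hA
  linarith [sum1, split, hA, hmid, hpen, hmerge]
end

section
/- (Theorem 3: convergence to FedKL-stationary points) Let Π denote the set of policies on finite S and A, i.e. the compact set of functions from S to the standard probability simplex on A. Let η : Π → ℝ be continuous, let q_1, …, q_N > 0 with Σ_{k=1}^N q_k = 1, and for each k let h_k : Π × Π → ℝ be continuous with h_k(π, π) = 0 for every π ∈ Π. Suppose (π^t)_{t∈ℕ} is a sequence in Π satisfying, for every t, η(π^{t+1}) ≥ η(π^t) + Σ_{k=1}^N q_k · max_{σ∈Π} h_k(σ, π^t) and max_{σ∈Π} h_k(σ, π^t) ≥ 0 for each k. Then the sequence (η(π^t)) converges, and every limit point π̂ of (π^t)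 is FedKL-stationary, i.e. max_{σ∈Π} h_k(σ, π̂) = 0 for every k = 1, …, N (so that for each k, π̂ maximizes σ ↦ h_k(σ, π̂) over Π). -/
open Finset Filter Topology

/-- The compact set of policies on finite `S` and `A`, viewed as the subtype
of functions `S → A → ℝ` assigning to each state a probability distribution
on actions. -/
def Policy (S A : Type*) [Fintype A] : Type _ :=
  {π : S → A → ℝ // ∀ s, (∀ a, 0 ≤ π s a) ∧ ∑ a, π s a = 1}

noncomputable instance {S A : Type*} [Fintype A] :
    TopologicalSpace (Policy S A) :=
  instTopologicalSpaceSubtype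

instance {S A : Type*} [Fintype A] [Nonempty A] : Nonempty (Policy S A) :=
  ⟨⟨fun _ _ => (Fintype.card A : ℝ)⁻¹, fun _ =>
    ⟨fun _ => by positivity, by
      rw [Finset.sum_const, Finset.card_univ, nsmul_eq_mul]
      exact mul_inv_cancel₀ (by exact_mod_cast Fintype.card_ne_zero)⟩⟩⟩

instance policyFC {S A : Type*} [Fintype S] [Fintype A] :
    FirstCountableTopology (Policy S A) :=
  inferInstanceAs (FirstCountableTopology
    {π : S → A → ℝ // ∀ s, (∀ a, 0 ≤ π s a) ∧ ∑ a, π s a = 1})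

instance policyCompact {S A : Type*} [Fintype S] [Fintype A] :
    CompactSpace (Policy S A) := by
  suffices hc : IsCompact {π : S → A → ℝ | ∀ s, (∀ a, 0 ≤ π s a) ∧ ∑ a, π s a = 1} from
    isCompact_iff_compactSpace.mp hc
  have hsub : {π : S → A → ℝ | ∀ s, (∀ a, 0 ≤ π s a) ∧ ∑ a, π s a = 1}
      ⊆ Set.univ.pi fun _ : S => Set.univ.pi fun _ : A => Set.Icc (0:ℝ) 1 := by
    intro π hπ
    intro s _ a _
    refine ⟨(hπ s).1 a, ?_⟩
    calc π s a ≤ ∑ b, π s b := Finset.single_le_sum (fun b _ => (hπ s).1 b) (mem_univ a)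
      _ = 1 := (hπ s).2
  have hcomp : IsCompact (Set.univ.pi fun _ : S => Set.univ.pi fun _ : A => Set.Icc (0:ℝ) 1) :=
    isCompact_univ_pi fun _ => isCompact_univ_pi fun _ => isCompact_Icc
  refine hcomp.of_isClosed_subset ?_ hsub
  have : {π : S → A → ℝ | ∀ s, (∀ a, 0 ≤ π s a) ∧ ∑ a, π s a = 1}
      = (⋂ s, ⋂ a, {π : S → A → ℝ | 0 ≤ π s a}) ∩ ⋂ s, {π : S → A → ℝ | ∑ a, π s a = 1} := by
    ext π
    simp only [Set.mem_setOf_eq, Set.mem_inter_iff, Set.mem_iInter]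
    exact ⟨fun h => ⟨fun s a => (h s).1 a, fun s => (h s).2⟩, fun h s => ⟨fun a => h.1 s a, h.2 s⟩⟩
  rw [this]
  refine IsClosed.inter (isClosed_iInter fun s => isClosed_iInter fun a => ?_)
    (isClosed_iInter fun s => ?_)
  · exact isClosed_le continuous_const ((continuous_apply a).comp (continuous_apply s))
  · exact isClosed_eq (continuous_finset_sum _ fun a _ =>
      (continuous_apply a).comp (continuous_apply s)) continuous_const

/-- Theorem 3, convergence to FedKL-stationary points: if
`η(π^{t+1}) ≥ η(π^t) + Σ_k q_k max_σ h_k(σ, π^t)` with each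
`max_σ h_k(σ, π^t) ≥ 0`, then `η(π^t)` converges and every limit point `π̂`
of `(π^t)` is FedKL-stationary, i.e. `max_σ h_k(σ, π̂) = 0` for every `k`. -/
theorem fedkl_convergence {S A : Type*} [Fintype S] [Fintype A] [Nonempty S]
    [Nonempty A]
    (N : ℕ) (q : Fin N → ℝ) (hq : ∀ k, 0 < q k) (hqsum : ∑ k, q k = 1)
    (η : Policy S A → ℝ) (hη : Continuous η)
    (h : Fin N → Policy S A → Policy S A → ℝ)
    (hcont : ∀ k, Continuous (fun p : Policy S A × Policy S A => h k p.1 p.2))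
    (hzero : ∀ k π, h k π π = 0)
    (seq : ℕ → Policy S A)
    (himp : ∀ t, η (seq (t + 1))
      ≥ η (seq t) + ∑ k, q k * (⨆ σ : Policy S A, h k σ (seq t)))
    (hnonneg : ∀ t k, 0 ≤ ⨆ σ : Policy S A, h k σ (seq t)) :
    (∃ L : ℝ, Tendsto (fun t => η (seq t)) atTop (𝓝 L)) ∧
    ∀ πhat : Policy S A, MapClusterPt πhat atTop seq →
      ∀ k, (⨆ σ : Policy S A, h k σ πhat) = 0 := by
  set g : Fin N → Policy S A → ℝ := fun k π => ⨆ σ : Policy S A, h k σ π with hg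
  -- boundedness of ranges
  have hbdd : ∀ k (π : Policy S A), BddAbove (Set.range fun σ => h k σ π) := by
    intro k π
    exact (isCompact_range ((hcont k).comp (continuous_id.prodMk continuous_const))).bddAbove
  -- monotone η∘seq
  have hsumnn : ∀ t, 0 ≤ ∑ k, q k * g k (seq t) := fun t =>
    Finset.sum_nonneg fun k _ => mul_nonneg (hq k).le (hnonneg t k)
  have hmono : Monotone fun t => η (seq t) := by
    refine monotone_nat_of_le_succ fun t => ?_
    have := himp t
    linarith [hsumnn t]
  have hbddη : BddAbove (Set.range fun t => η (seq t)) := by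
    obtain ⟨C, hC⟩ := (isCompact_range hη).bddAbove
    exact ⟨C, fun x ⟨t, ht⟩ => ht ▸ hC ⟨seq t, rfl⟩⟩
  have hconv : Tendsto (fun t => η (seq t)) atTop (𝓝 (⨆ t, η (seq t))) :=
    tendsto_atTop_ciSup hmono hbddη
  refine ⟨⟨_, hconv⟩, ?_⟩
  -- Σ q_k g_k(seq t) → 0
  have hdiff : Tendsto (fun t => ∑ k, q k * g k (seq t)) atTop (𝓝 0) := by
    have h1 : Tendsto (fun t => η (seq (t + 1)) - η (seq t)) atTop (𝓝 0) := by
      have := (hconv.comp (tendsto_add_atTop_nat 1)).sub hconv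
      simpa using this
    refine squeeze_zero hsumnn (fun t => ?_) h1
    have := himp t; linarith
  -- each g_k(seq t) → 0
  have hgk : ∀ k, Tendsto (fun t => g k (seq t)) atTop (𝓝 0) := by
    intro k
    have hterm : Tendsto (fun t => q k * g k (seq t)) atTop (𝓝 0) := by
      refine squeeze_zero (fun t => mul_nonneg (hq k).le (hnonneg t k)) (fun t => ?_) hdiff
      exact Finset.single_le_sum (fun j _ => mul_nonneg (hq j).le (hnonneg t j)) (mem_univ k)
    have := hterm.const_mul (q k)⁻¹
    simpa [mul_comm, inv_mul_cancel_left₀ (hq k).ne'] using this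
  intro πhat hcl k
  obtain ⟨ψ, hψ, hψt⟩ := TopologicalSpace.FirstCountableTopology.tendsto_subseq hcl
  have hle : ∀ σ : Policy S A, h k σ πhat ≤ 0 := by
    intro σ
    have h2 : Tendsto (fun n => h k σ (seq (ψ n))) atTop (𝓝 (h k σ πhat)) := by
      have : Continuous fun π => h k σ π :=
        (hcont k).comp (continuous_const.prodMk continuous_id)
      exact (this.continuousAt.tendsto).comp hψt
    have h3 : Tendsto (fun n => g k (seq (ψ n))) atTop (𝓝 0) :=
      (hgk k).comp hψ.tendsto_atTop
    refine le_of_tendsto_of_tendsto h2 h3 (Filter.Eventually.of_forall fun n => ?_)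
    exact le_ciSup (hbdd k (seq (ψ n))) σ
  have hub : g k πhat ≤ 0 := ciSup_le hle
  have hlb : 0 ≤ g k πhat := (hzero k πhat) ▸ le_ciSup (hbdd k πhat) πhat
  exact le_antisymm hub hlb
end
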